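/- arXiv:2603.20158 — 4 statements merged into one kernel-verified Lean document; each statement's English description precedes it below -/
import Mathlib

section
/- For ℓ a natural number with ℓ ≥ 4, the number cos²(π/ℓ) is rational if and only if ℓ = 4 or ℓ = 6. -/
/-!
Since `cos² θ = (1 + cos 2θ) / 2`, the number `cos² (π / ℓ)` is rational exactly when
`cos (2π / ℓ)` is. For `ℓ ≥ 2` the angle `2π / ℓ` lies in `[0, π]`, and by Niven's theorem the
only rational multiples of `π` there with rational cosine are `0, π/3, π/2, 2π/3, π`.
-/

open Real

theorem exists_rat_cos_sq_iff_exists_rat_cos_two_mul (θ : ℝ) :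
    (∃ q : ℚ, cos θ ^ 2 = q) ↔ ∃ q : ℚ, cos (2 * θ) = q := by
  rw [cos_sq]
  constructor
  · rintro ⟨q, hq⟩
    exact ⟨2 * q - 1, by push_cast; linarith⟩
  · rintro ⟨q, hq⟩
    exact ⟨(1 + q) / 2, by push_cast; linarith⟩

theorem cos_two_pi_div_three : cos (2 * π / 3) = -1 / 2 := by
  rw [show 2 * π / 3 = π - π / 3 by ring, cos_pi_sub, cos_pi_div_three]
  norm_num

theorem exists_rat_cos_two_pi_div_iff {n : ℕ} (hn : 2 ≤ n) :
    (∃ q : ℚ, cos (2 * π / n) = q) ↔ n = 2 ∨ n = 3 ∨ n = 4 ∨ n = 6 := by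
  constructor
  · intro hcos
    have hangle : ((2 / n : ℚ) : ℝ) * π = 2 * π / n := by push_cast; ring
    have hbnd : (2 / n : ℚ) ∈ Set.Icc 0 1 := by
      refine ⟨by positivity, ?_⟩
      rw [div_le_one (by positivity)]
      exact_mod_cast hn
    have hniven := niven_angle_div_pi_eq (hangle ▸ hcos) hbnd
    simp only [Set.mem_insert_iff, Set.mem_singleton_iff] at hniven
    rcases hniven with h | h | h | h | h <;> field_simp at h <;> norm_cast at h <;> omega
  · rintro (rfl | rfl | rfl | rfl)
    · exact ⟨-1, by simp⟩
    · exact ⟨-1 / 2, by push_cast; exact cos_two_pi_div_three⟩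
    · exact ⟨0, by rw [show 2 * π / (4 : ℕ) = π / 2 by push_cast; ring]; simp⟩
    · exact ⟨1 / 2, by rw [show 2 * π / (6 : ℕ) = π / 3 by push_cast; ring]; simp⟩

theorem cos_sq_pi_div_rational_iff (ℓ : ℕ) (hℓ : 4 ≤ ℓ) :
    (∃ q : ℚ, (Real.cos (Real.pi / ℓ)) ^ 2 = (q : ℝ)) ↔ ℓ = 4 ∨ ℓ = 6 := by
  rw [exists_rat_cos_sq_iff_exists_rat_cos_two_mul, ← mul_div_assoc,
    exists_rat_cos_two_pi_div_iff (by omega)]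
  omega
end

section
/- Let d ≥ 2 and let U be a unitary on a Hilbert space with U^d = 1 and suppose two copies U_1, U_2 satisfy U_1 U_2 = ξ² U_2 U_1 with ξ a primitive (2d or d)-th root of unity as above. Then G := d^{-1/2} Σ_{k=0}^{d-1} ξ^{k²} U^k is unitary. -/
open Matrix Kronecker Complex

/-- The algebra `M_d ⊗ M_d` realized as matrices indexed by pairs. -/
abbrev MM (d : ℕ) := Matrix (Fin d × Fin d) (Fin d × Fin d) ℂ

/-- `R ⊗ 1` acting on the triple tensor product `ℂ^d ⊗ ℂ^d ⊗ ℂ^d`. -/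
def amp1 {d : ℕ} (R : MM d) :
    Matrix (Fin d × Fin d × Fin d) (Fin d × Fin d × Fin d) ℂ :=
  Matrix.of fun x y => R (x.1, x.2.1) (y.1, y.2.1) * (if x.2.2 = y.2.2 then 1 else 0)

/-- `1 ⊗ R` acting on the triple tensor product `ℂ^d ⊗ ℂ^d ⊗ ℂ^d`. -/
def amp2 {d : ℕ} (R : MM d) :
    Matrix (Fin d × Fin d × Fin d) (Fin d × Fin d × Fin d) ℂ :=
  Matrix.of fun x y => (if x.1 = y.1 then 1 else 0) * R (x.2.1, x.2.2) (y.2.1, y.2.2)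

/-- The Yang-Baxter equation `(R⊗1)(1⊗R)(R⊗1) = (1⊗R)(R⊗1)(1⊗R)`. -/
def YBE {d : ℕ} (R : MM d) : Prop :=
  amp1 R * amp2 R * amp1 R = amp2 R * amp1 R * amp2 R

/-- The root of unity `ξ`: `e^{2πi/d}` for `d` odd, `e^{πi/d}` for `d` even. -/
noncomputable def xi (d : ℕ) : ℂ :=
  if Odd d then Complex.exp (2 * Real.pi * Complex.I / d)
  else Complex.exp (Real.pi * Complex.I / d)

/-- The unitary `U` on `ℂ^d ⊗ ℂ^d` with `U(e_k ⊗ e_l) = ξ^{l-k} e_{k+1} ⊗ e_{l+1}`,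
indices mod `d`. -/
noncomputable def Ug (d : ℕ) [NeZero d] : MM d :=
  Matrix.of fun p q =>
    if p.1 = q.1 + 1 ∧ p.2 = q.2 + 1 then xi d ^ ((q.2 : ℤ) - (q.1 : ℤ)) else 0

/-- The Gaussian R-matrix `G_d = d^{-1/2} Σ_k ξ^{k²} U^k`. -/
noncomputable def Gg (d : ℕ) [NeZero d] : MM d :=
  ((Real.sqrt d : ℂ))⁻¹ • ∑ k ∈ Finset.range d, xi d ^ (k ^ 2) • Ug d ^ k

/-!
Index the sum by `a ∈ ℤ/d`, which is legitimate because `U ^ d = 1` and `n ↦ ξ^{n²}` is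
`d`-periodic. Unitarity of `U` gives `d · G G* = Σ_m (Σ_b ξ^{(b+m)²} conj ξ^{b²}) U^m`, and
`ξ^{(b+m)²} conj ξ^{b²} = ξ^{m²} (ξ²)^{bm}`. Since `ξ²` is a primitive `d`-th root of unity, the
inner sum is a character sum over `ℤ/d`, equal to `d` for `m = 0` and to `0` otherwise.
-/

open Finset

lemma Finset.sum_range_eq_sum_zmod {M : Type*} [AddCommMonoid M] (d : ℕ) [NeZero d]
    (f : ℕ → M) : ∑ k ∈ range d, f k = ∑ a : ZMod d, f a.val := by
  obtain ⟨n, rfl⟩ := Nat.exists_eq_add_one_of_ne_zero (NeZero.ne d)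
  exact Finset.sum_range f

lemma pow_zmod_val_add {M : Type*} [Monoid M] {d : ℕ} [NeZero d] {u : M} (hu : u ^ d = 1)
    (a b : ZMod d) : u ^ (a + b).val = u ^ a.val * u ^ b.val := by
  rw [ZMod.val_add, ← pow_eq_pow_mod _ hu, pow_add]

theorem sum_smul_pow_zmod_val_mul_star {R A : Type*} [CommSemiring R] [StarRing R] [Semiring A]
    [StarRing A] [Algebra R A] [StarModule R A] {d : ℕ} [NeZero d] {u : A}
    (hu : u ∈ unitary A) (hud : u ^ d = 1) (c : ZMod d → R) :
    (∑ a, c a • u ^ a.val) * star (∑ a, c a • u ^ a.val) =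
      ∑ m, (∑ b, c (b + m) * star (c b)) • u ^ m.val := by
  have hpow (b m : ZMod d) : u ^ (b + m).val * star (u ^ b.val) = u ^ m.val := by
    rw [add_comm, pow_zmod_val_add hud, mul_assoc,
      Unitary.mul_star_self_of_mem (pow_mem hu _), mul_one]
  calc (∑ a, c a • u ^ a.val) * star (∑ a, c a • u ^ a.val)
      = ∑ b, ∑ a, (c a * star (c b)) • (u ^ a.val * star (u ^ b.val)) := by
        simp only [star_sum, star_smul, sum_mul_sum, smul_mul_smul_comm]
        exact sum_comm
    _ = ∑ b, ∑ m, (c (b + m) * star (c b)) • u ^ m.val := by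
        refine sum_congr rfl fun b _ => ?_
        rw [← Equiv.sum_comp (Equiv.addLeft b)]
        simp only [Equiv.coe_addLeft, hpow]
    _ = _ := by
        rw [sum_comm]
        simp only [sum_smul]

lemma xi_ne_zero (d : ℕ) : xi d ≠ 0 := by
  unfold xi; split_ifs <;> exact Complex.exp_ne_zero _

lemma star_xi (d : ℕ) : star (xi d) = (xi d)⁻¹ := by
  unfold xi; split_ifs <;>
  · rw [Complex.star_def, ← Complex.exp_conj, ← Complex.exp_neg]
    congr 1
    simp only [map_div₀, map_mul, map_ofNat, conj_ofReal, conj_I, mul_neg, map_natCast]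
    ring

lemma xi_pow_self_of_odd {d : ℕ} (hd : Odd d) : xi d ^ d = 1 := by
  rw [xi, if_pos hd]
  exact (Complex.isPrimitiveRoot_exp d hd.pos.ne').pow_eq_one

lemma isPrimitiveRoot_xi_sq {d : ℕ} (hd : d ≠ 0) : IsPrimitiveRoot (xi d ^ 2) d := by
  unfold xi; split_ifs with h
  · exact (Complex.isPrimitiveRoot_exp d hd).pow_of_coprime 2 (Nat.coprime_two_left.mpr h)
  · rw [← Complex.exp_nat_mul]
    convert Complex.isPrimitiveRoot_exp d hd using 2
    push_cast; ring

lemma periodic_xi_pow_sq (d : ℕ) : Function.Periodic (fun n : ℕ => xi d ^ (n ^ 2)) d := by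
  rcases eq_or_ne d 0 with rfl | hd0
  · intro n; simp
  have hdvd : ∀ n : ℕ, xi d ^ (d * (2 * n + d)) = 1 := by
    rcases Nat.even_or_odd d with ⟨c, hc⟩ | hd
    · intro n
      rw [show d * (2 * n + d) = 2 * d * (n + c) by rw [hc]; ring, pow_mul, pow_mul,
        (isPrimitiveRoot_xi_sq hd0).pow_eq_one, one_pow]
    · intro n
      rw [pow_mul, xi_pow_self_of_odd hd, one_pow]
  intro n
  simp only
  -- `(n + d)² - n² = d (2n + d)`, and `2n + d` is even whenever `d` is
  rw [show (n + d) ^ 2 = n ^ 2 + d * (2 * n + d) by ring, pow_add, hdvd, mul_one]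

noncomputable def gaussPhase (d : ℕ) (a : ZMod d) : ℂ := xi d ^ (a.val ^ 2)

lemma gaussPhase_natCast {d : ℕ} (n : ℕ) : gaussPhase d n = xi d ^ (n ^ 2) := by
  rw [gaussPhase, ZMod.val_natCast, (periodic_xi_pow_sq d).map_mod_nat]

noncomputable def xiSqChar (d : ℕ) [NeZero d] : AddChar (ZMod d) ℂ :=
  AddChar.zmodChar d (isPrimitiveRoot_xi_sq (NeZero.ne d)).pow_eq_one

section

variable {d : ℕ} [NeZero d]

lemma xiSqChar_isPrimitive : (xiSqChar d).IsPrimitive :=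
  AddChar.zmodChar_primitive_of_primitive_root d (isPrimitiveRoot_xi_sq (NeZero.ne d))

lemma gaussPhase_add_mul_star (b m : ZMod d) :
    gaussPhase d (b + m) * star (gaussPhase d b) = gaussPhase d m * xiSqChar d (b * m) := by
  rw [← ZMod.natCast_zmod_val b, ← ZMod.natCast_zmod_val m, ← Nat.cast_add, ← Nat.cast_mul,
    gaussPhase_natCast, gaussPhase_natCast, gaussPhase_natCast, xiSqChar,
    AddChar.zmodChar_apply', star_pow, star_xi,
    show (b.val + m.val) ^ 2 = b.val ^ 2 + m.val ^ 2 + 2 * (b.val * m.val) by ring,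
    pow_add, pow_add, pow_mul, inv_pow]
  field_simp [xi_ne_zero]

theorem sum_gaussPhase_add_mul_star (m : ZMod d) :
    ∑ b, gaussPhase d (b + m) * star (gaussPhase d b) = if m = 0 then (d : ℂ) else 0 := by
  simp only [gaussPhase_add_mul_star, ← mul_sum, AddChar.sum_mulShift m xiSqChar_isPrimitive,
    ZMod.card]
  split_ifs with hm
  · simp [hm, gaussPhase]
  · rw [Nat.cast_zero, mul_zero]

end

theorem gaussian_unitary_general (d : ℕ) (hd : 2 ≤ d) (U : MM d)
    (hU : U ∈ Matrix.unitaryGroup (Fin d × Fin d) ℂ)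
    (hUd : U ^ d = 1) :
    ((Real.sqrt d : ℂ))⁻¹ • ∑ k ∈ Finset.range d, xi d ^ (k ^ 2) • U ^ k
      ∈ Matrix.unitaryGroup (Fin d × Fin d) ℂ := by
  have : NeZero d := ⟨by omega⟩
  set G := ∑ a : ZMod d, gaussPhase d a • U ^ a.val
  have hG : ∑ k ∈ range d, xi d ^ (k ^ 2) • U ^ k = G := Finset.sum_range_eq_sum_zmod d _
  have hGG : G * star G = (d : ℂ) • 1 := by
    rw [sum_smul_pow_zmod_val_mul_star hU hUd]
    simp only [sum_gaussPhase_add_mul_star, ite_smul, zero_smul, sum_ite_eq', mem_univ, if_true,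
      ZMod.val_zero, pow_zero]
  have hsqrt : ((Real.sqrt d : ℂ))⁻¹ * star ((Real.sqrt d : ℂ))⁻¹ * d = 1 := by
    rw [star_inv₀, Complex.star_def, Complex.conj_ofReal, ← mul_inv, ← Complex.ofReal_mul,
      Real.mul_self_sqrt (Nat.cast_nonneg d), Complex.ofReal_natCast, inv_mul_cancel₀]
    exact_mod_cast NeZero.ne d
  rw [Matrix.mem_unitaryGroup_iff, hG, star_smul, smul_mul_smul_comm, hGG, smul_smul, hsqrt,
    one_smul]

/-- If `U` is a unitary on `ℂ^d ⊗ ℂ^d` with `U^d = 1` whose two copies satisfy the exchange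
relation `U₁ U₂ = ξ² U₂ U₁`, then `G = d^{-1/2} Σ_{k=0}^{d-1} ξ^{k²} U^k` is unitary. -/
theorem gaussian_unitary (d : ℕ) (hd : 2 ≤ d) (U : MM d)
    (hU : U ∈ Matrix.unitaryGroup (Fin d × Fin d) ℂ)
    (hUd : U ^ d = 1)
    (hexch : amp1 U * amp2 U = xi d ^ 2 • (amp2 U * amp1 U)) :
    ((Real.sqrt d : ℂ))⁻¹ • ∑ k ∈ Finset.range d, xi d ^ (k ^ 2) • U ^ k
      ∈ Matrix.unitaryGroup (Fin d × Fin d) ℂ :=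
  gaussian_unitary_general d hd U hU hUd
end

section
/- Let q ∈ ℂ, q ≠ -1, and let R be an operator on V⊗V with minimal polynomial dividing (x+1)(x-q), with spectral projection P for eigenvalue -1, so R = -P + q(1-P). Then R satisfies the Yang-Baxter equation on V⊗V⊗V if and only if the projections E_1 = P⊗1 and E_2 = 1⊗P satisfy the Hecke relation E_1E_2E_1 - (q/(1+q)²)E_1 = E_2E_1E_2 - (q/(1+q)²)E_2. -/
open Matrix Kronecker Complex

/-! `amp1` and `amp2` are the algebra homomorphisms `A ↦ A ⊗ 1` and `A ↦ 1 ⊗ A` (up to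
reassociating the index), so `E₁ = P ⊗ 1` and `E₂ = 1 ⊗ P` are idempotents and
`R ⊗ 1 = q - (1+q) E₁`, `1 ⊗ R = q - (1+q) E₂`. Expanding with `Eᵢ² = Eᵢ`, the two sides of
the braid relation differ by `q(1+q)(E₁ - E₂) - (1+q)³(E₁E₂E₁ - E₂E₁E₂)`, and dividing by
`(1+q)³ ≠ 0` leaves exactly the Hecke relation. -/

namespace Matrix

variable (R : Type*) {m n : Type*} [CommSemiring R] [Fintype m] [Fintype n] [DecidableEq m]
  [DecidableEq n]

def kroneckerOneAlgHom : Matrix m m R →ₐ[R] Matrix (m × n) (m × n) R where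
  toFun A := A ⊗ₖ (1 : Matrix n n R)
  map_one' := one_kronecker_one
  map_mul' A B := by rw [← mul_kronecker_mul, one_mul]
  map_zero' := zero_kronecker _
  map_add' A B := add_kronecker _ _ _
  commutes' r := by simp only [Algebra.algebraMap_eq_smul_one, smul_kronecker, one_kronecker_one]

def oneKroneckerAlgHom : Matrix n n R →ₐ[R] Matrix (m × n) (m × n) R where
  toFun A := (1 : Matrix m m R) ⊗ₖ A
  map_one' := one_kronecker_one
  map_mul' A B := by rw [← mul_kronecker_mul, one_mul]
  map_zero' := kronecker_zero _
  map_add' A B := kronecker_add _ _ _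
  commutes' r := by simp only [Algebra.algebraMap_eq_smul_one, kronecker_smul, one_kronecker_one]

end Matrix

section Hecke

variable {K A : Type*} [Field K] [Ring A] [Algebra K A]

theorem braid_sub_braid_of_isIdempotentElem (q : K) {e f : A} (he : IsIdempotentElem e)
    (hf : IsIdempotentElem f) :
    (q • 1 - (1 + q) • e) * (q • 1 - (1 + q) • f) * (q • 1 - (1 + q) • e) -
        (q • 1 - (1 + q) • f) * (q • 1 - (1 + q) • e) * (q • 1 - (1 + q) • f) =
      (q * (1 + q)) • (e - f) - (1 + q) ^ 3 • (e * f * e - f * e * f) := by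
  simp only [sub_mul, mul_sub, smul_sub, smul_smul, mul_smul_comm, smul_mul_assoc,
    mul_one, one_mul, he.eq, hf.eq]
  module

theorem braid_iff_hecke_of_isIdempotentElem {q : K} (hq : 1 + q ≠ 0) {e f : A}
    (he : IsIdempotentElem e) (hf : IsIdempotentElem f) :
    (q • 1 - (1 + q) • e) * (q • 1 - (1 + q) • f) * (q • 1 - (1 + q) • e) =
        (q • 1 - (1 + q) • f) * (q • 1 - (1 + q) • e) * (q • 1 - (1 + q) • f) ↔
      e * f * e - (q / (1 + q) ^ 2) • e = f * e * f - (q / (1 + q) ^ 2) • f := by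
  have hcoeff : q * (1 + q) = (1 + q) ^ 3 * (q / (1 + q) ^ 2) := by field_simp
  rw [← sub_eq_zero, braid_sub_braid_of_isIdempotentElem q he hf, hcoeff, ← smul_smul,
    ← smul_sub, smul_eq_zero_iff_right (pow_ne_zero 3 hq), ← sub_eq_zero (a := e * f * e - _),
    ← neg_eq_zero (a := _ - (f * e * f - _))]
  exact Eq.congr_left (by module)

end Hecke

def amp1AlgHom (d : ℕ) : MM d →ₐ[ℂ] Matrix (Fin d × Fin d × Fin d) (Fin d × Fin d × Fin d) ℂ :=
  (reindexAlgEquiv ℂ ℂ (Equiv.prodAssoc (Fin d) (Fin d) (Fin d))).toAlgHom.comp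
    (kroneckerOneAlgHom ℂ)

def amp2AlgHom (d : ℕ) : MM d →ₐ[ℂ] Matrix (Fin d × Fin d × Fin d) (Fin d × Fin d × Fin d) ℂ :=
  oneKroneckerAlgHom ℂ

theorem coe_amp1AlgHom (d : ℕ) : ⇑(amp1AlgHom d) = amp1 := by
  ext R ⟨i, j, k⟩ ⟨i', j', k'⟩
  simp [amp1AlgHom, kroneckerOneAlgHom, amp1, one_apply]

theorem coe_amp2AlgHom (d : ℕ) : ⇑(amp2AlgHom d) = amp2 := by
  ext R ⟨i, j, k⟩ ⟨i', j', k'⟩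
  simp [amp2AlgHom, oneKroneckerAlgHom, amp2, one_apply]

/-- For `q ≠ -1` and an idempotent `P` on `V ⊗ V`, the operator `R = -P + q(1-P)`
satisfies the Yang-Baxter equation if and only if `E₁ = P⊗1`, `E₂ = 1⊗P` satisfy the
Hecke relation `E₁E₂E₁ - (q/(1+q)²)E₁ = E₂E₁E₂ - (q/(1+q)²)E₂`. -/
theorem YBE_iff_Hecke (d : ℕ) (q : ℂ) (hq : q ≠ -1) (P : MM d) (hP : P * P = P) :
    YBE (q • (1 : MM d) - (1 + q) • P) ↔
      amp1 P * amp2 P * amp1 P - (q / (1 + q) ^ 2) • amp1 P =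
        amp2 P * amp1 P * amp2 P - (q / (1 + q) ^ 2) • amp2 P := by
  have hq' : 1 + q ≠ 0 := by
    rwa [Ne, add_eq_zero_iff_neg_eq, eq_comm]
  have hPidem : IsIdempotentElem P := hP
  rw [YBE, ← coe_amp1AlgHom, ← coe_amp2AlgHom]
  simp only [map_sub, map_smul, map_one]
  exact braid_iff_hecke_of_isIdempotentElem hq' (hPidem.map _) (hPidem.map _)
end

section
/- Let q ∈ 𝕋, q ≠ ±1, and let P₁ = P⊗1, P₂ = 1⊗P be orthogonal projections on V^{⊗3} coming from a Hecke projection P (i.e. P₁P₂P₁ - xP₁ = P₂P₁P₂ - xP₂ with x = q/(1+q)²) such that the normalized trace τ satisfies the Markov property τ(P₁P₂) = τ(P)². Then the Temperley-Lieb relation P₁P₂P₁ = xP₁ holds if and only if τ(P) = x. -/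
open Matrix Kronecker Complex

/-- The normalized trace on `End(V^{⊗3})`, `V = ℂ^d`. -/
noncomputable def ntr3 {d : ℕ}
    (A : Matrix (Fin d × Fin d × Fin d) (Fin d × Fin d × Fin d) ℂ) : ℂ :=
  Matrix.trace A / (d : ℂ) ^ 3

/-! With `B = P₁P₂P₁ - xP₁`, the Hecke relation gives `B = P₂P₁P₂ - xP₂`, hence
`BP₁ = BP₂ = B` and `B² = (1 - x)B`; since `x` is real, `B` is self-adjoint. The Markov
property gives `τ(B) = τ(P₁)(τ(P₁) - x)`, and `τ(P₁) ≠ 0` for the nonzero projection `P₁`.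
So `B = 0` forces `τ(P₁) = x`; conversely, if `τ(P₁) = x` then `τ(B*B) = (1 - x)τ(B) = 0`,
and `B = 0` by faithfulness of the trace. -/

open scoped ComplexOrder

section Hecke

variable {K A : Type*} [CommRing K] [Ring A] [Algebra K A]

/-- The Hecke relation says that this is symmetric in `p` and `e`. -/
def heckeDefect (x : K) (p e : A) : A :=
  p * e * p - x • p

variable {x : K} {p e : A}

lemma heckeDefect_mul_of_isIdempotentElem (hp : IsIdempotentElem p) :
    heckeDefect x p e * p = heckeDefect x p e := by
  simp only [heckeDefect, sub_mul, smul_mul_assoc, mul_assoc, hp.eq]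

lemma heckeDefect_mul_self (hp : IsIdempotentElem p) (he : IsIdempotentElem e)
    (hsymm : heckeDefect x p e = heckeDefect x e p) :
    heckeDefect x p e * heckeDefect x p e = (1 - x) • heckeDefect x p e := by
  have hBp := heckeDefect_mul_of_isIdempotentElem (x := x) (e := e) hp
  have hBe : heckeDefect x p e * e = heckeDefect x p e := by
    rw [hsymm]; exact heckeDefect_mul_of_isIdempotentElem he
  nth_rewrite 2 [heckeDefect]
  rw [mul_sub, mul_smul_comm, ← mul_assoc, ← mul_assoc, hBp, hBe, hBp, sub_smul, one_smul]

lemma IsSelfAdjoint.heckeDefect [StarRing K] [StarRing A] [StarModule K A]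
    (hx : IsSelfAdjoint x) (hp : IsSelfAdjoint p) (he : IsSelfAdjoint e) :
    IsSelfAdjoint (heckeDefect x p e) := by
  have hpep : IsSelfAdjoint (p * e * p) := by simpa only [hp.star_eq] using he.conjugate p
  exact hpep.sub (hx.smul hp)

end Hecke

section MatrixTrace

variable {n 𝕜 : Type*} [Fintype n]

lemma Matrix.trace_mul_mul_self_of_isIdempotentElem [CommRing 𝕜] {p : Matrix n n 𝕜}
    (hp : IsIdempotentElem p) (e : Matrix n n 𝕜) : trace (p * e * p) = trace (p * e) := by
  rw [trace_mul_comm, ← mul_assoc, hp.eq]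

variable [Field 𝕜] [PartialOrder 𝕜] [StarRing 𝕜] [StarOrderedRing 𝕜]

lemma IsStarProjection.matrix_trace_eq_zero_iff {p : Matrix n n 𝕜} (hp : IsStarProjection p) :
    trace p = 0 ↔ p = 0 :=
  calc trace p = 0 ↔ trace (pᴴ * p) = 0 := by
        rw [← star_eq_conjTranspose, hp.isSelfAdjoint.star_eq, hp.isIdempotentElem.eq]
    _ ↔ p = 0 := trace_conjTranspose_mul_self_eq_zero_iff

lemma heckeDefect_eq_zero_of_trace_eq_zero [DecidableEq n] {x : 𝕜} {p e : Matrix n n 𝕜}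
    (hx : IsSelfAdjoint x) (hp : IsStarProjection p) (he : IsStarProjection e)
    (hsymm : heckeDefect x p e = heckeDefect x e p) (htr : trace (heckeDefect x p e) = 0) :
    heckeDefect x p e = 0 := by
  have hB := hx.heckeDefect hp.isSelfAdjoint he.isSelfAdjoint
  rw [← trace_conjTranspose_mul_self_eq_zero_iff, ← star_eq_conjTranspose, hB.star_eq,
    heckeDefect_mul_self hp.isIdempotentElem he.isIdempotentElem hsymm, trace_smul, htr,
    smul_zero]

end MatrixTrace

lemma isSelfAdjoint_div_one_add_sq {𝕜 : Type*} [RCLike 𝕜] {q : 𝕜} (hq : ‖q‖ = 1) :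
    IsSelfAdjoint (q / (1 + q) ^ 2) := by
  have hq0 : q ≠ 0 := by rintro rfl; simp at hq
  have hx : q / (1 + q) ^ 2 = (star q + q + 2)⁻¹ := by
    rw [← starRingEnd_apply, ← RCLike.inv_eq_conj hq]
    field_simp
    ring
  rw [hx]
  exact ((IsSelfAdjoint.star_add_self q).add (.ofNat 2)).inv₀

section Amplification

variable {d : ℕ}

lemma amp1_mul (A B : MM d) : amp1 (A * B) = amp1 A * amp1 B := by
  ext ⟨a, b, c⟩ ⟨a', b', c'⟩
  simp [amp1, Matrix.mul_apply, Fintype.sum_prod_type, mul_ite, ite_mul]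

lemma amp2_mul (A B : MM d) : amp2 (A * B) = amp2 A * amp2 B := by
  ext ⟨a, b, c⟩ ⟨a', b', c'⟩
  simp [amp2, Matrix.mul_apply, Fintype.sum_prod_type, mul_ite, ite_mul, Finset.mul_sum]

lemma star_amp1 (A : MM d) : star (amp1 A) = amp1 (star A) := by
  ext ⟨a, b, c⟩ ⟨a', b', c'⟩
  by_cases h : c = c' <;> simp [amp1, h, eq_comm]

lemma star_amp2 (A : MM d) : star (amp2 A) = amp2 (star A) := by
  ext ⟨a, b, c⟩ ⟨a', b', c'⟩
  by_cases h : a = a' <;> simp [amp2, h, eq_comm]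

lemma amp1_eq_zero_iff {A : MM d} : amp1 A = 0 ↔ A = 0 := by
  refine ⟨fun h => ?_, fun h => ?_⟩
  · ext ⟨a, b⟩ ⟨a', b'⟩
    simpa [amp1] using congr_fun₂ h (a, b, a) (a', b', a)
  · ext; simp [amp1, h]

lemma IsStarProjection.amp1 {P : MM d} (hP : IsStarProjection P) : IsStarProjection (amp1 P) :=
  ⟨by rw [IsIdempotentElem, ← amp1_mul, hP.isIdempotentElem.eq],
    by rw [IsSelfAdjoint, star_amp1, hP.isSelfAdjoint.star_eq]⟩

lemma IsStarProjection.amp2 {P : MM d} (hP : IsStarProjection P) : IsStarProjection (amp2 P) :=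
  ⟨by rw [IsIdempotentElem, ← amp2_mul, hP.isIdempotentElem.eq],
    by rw [IsSelfAdjoint, star_amp2, hP.isSelfAdjoint.star_eq]⟩

lemma ntr3_eq_zero_iff {A : Matrix (Fin d × Fin d × Fin d) (Fin d × Fin d × Fin d) ℂ} :
    ntr3 A = 0 ↔ trace A = 0 := by
  rcases eq_or_ne d 0 with rfl | hd
  · simp [ntr3, trace]
  · simp [ntr3, hd]

end Amplification

theorem TemperleyLieb_iff_trace_general (d : ℕ) (q : ℂ) (hq : ‖q‖ = 1) (P : MM d)
    (hidem : P * P = P) (hsa : Pᴴ = P) (hP0 : P ≠ 0)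
    (hHecke : amp1 P * amp2 P * amp1 P - (q / (1 + q) ^ 2) • amp1 P =
      amp2 P * amp1 P * amp2 P - (q / (1 + q) ^ 2) • amp2 P)
    (hMarkov : ntr3 (amp1 P * amp2 P) = ntr3 (amp1 P) * ntr3 (amp1 P)) :
    amp1 P * amp2 P * amp1 P = (q / (1 + q) ^ 2) • amp1 P ↔
      ntr3 (amp1 P) = q / (1 + q) ^ 2 := by
  set x := q / (1 + q) ^ 2
  have hP : IsStarProjection P := ⟨hidem, hsa⟩
  have hP₁ := hP.amp1
  have hP₂ := hP.amp2
  have hntr :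
      ntr3 (heckeDefect x (amp1 P) (amp2 P)) = ntr3 (amp1 P) * (ntr3 (amp1 P) - x) := by
    have : ntr3 (heckeDefect x (amp1 P) (amp2 P)) =
        ntr3 (amp1 P * amp2 P) - x * ntr3 (amp1 P) := by
      simp only [ntr3, heckeDefect, trace_sub, trace_smul,
        trace_mul_mul_self_of_isIdempotentElem hP₁.isIdempotentElem, smul_eq_mul]
      ring
    rw [this, hMarkov]; ring
  have ht : ntr3 (amp1 P) ≠ 0 := by
    rwa [Ne, ntr3_eq_zero_iff, hP₁.matrix_trace_eq_zero_iff, amp1_eq_zero_iff]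
  rw [← sub_eq_zero, ← heckeDefect]
  constructor
  · intro h0
    rw [h0, ntr3_eq_zero_iff.mpr (trace_zero _ _), zero_eq_mul] at hntr
    exact sub_eq_zero.mp (hntr.resolve_left ht)
  · intro htx
    refine heckeDefect_eq_zero_of_trace_eq_zero (isSelfAdjoint_div_one_add_sq hq) hP₁ hP₂
      hHecke ?_
    rw [← ntr3_eq_zero_iff, hntr, htx, sub_self, mul_zero]

/-- For a Hecke projection `P` whose normalized trace has the Markov property
`τ(P₁P₂) = τ(P)²`, the Temperley-Lieb relation `P₁P₂P₁ = xP₁` with `x = q/(1+q)²`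
holds if and only if `τ(P) = x`. -/
theorem TemperleyLieb_iff_trace (d : ℕ) (q : ℂ) (hq : ‖q‖ = 1)
    (hq1 : q ≠ 1) (hq2 : q ≠ -1) (P : MM d)
    (hidem : P * P = P) (hsa : Pᴴ = P) (hP0 : P ≠ 0)
    (hHecke : amp1 P * amp2 P * amp1 P - (q / (1 + q) ^ 2) • amp1 P =
      amp2 P * amp1 P * amp2 P - (q / (1 + q) ^ 2) • amp2 P)
    (hMarkov : ntr3 (amp1 P * amp2 P) = ntr3 (amp1 P) * ntr3 (amp1 P)) :
    amp1 P * amp2 P * amp1 P = (q / (1 + q) ^ 2) • amp1 P ↔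
      ntr3 (amp1 P) = q / (1 + q) ^ 2 :=
  TemperleyLieb_iff_trace_general d q hq P hidem hsa hP0 hHecke hMarkov
end
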